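/- Let x be a probability measure on genotypes {-1,+1}^L, let π(x) be its product-of-marginals projection, and let U be a polynomial of degree at most 2. Define S^ℓ(π(x)) := Cov_{π(x)}(U(Z(g)), 1_{g^ℓ=+1}) with Z(g) = (1/L)∑_ℓ g^ℓ. Then for every ℓ, L·S^ℓ(π(x)) = p^ℓ(x)(1-p^ℓ(x)) · 2U'(⟨μ_x, 2·Id - 1⟩) + O(1/L), where the O(1/L) is uniform over x, p^ℓ(x) is the frequency of the +1 allele at ℓ, and μ_x = (1/L)∑_ℓ δ_{p^ℓ(x)}. -/
import Mathlib


open Finset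

noncomputable def spin (b : Bool) : ℝ := if b then 1 else -1

/-- The additive trait `Z(γ) = (1/L) ∑_ℓ γ^ℓ`. -/
noncomputable def trait {L : ℕ} (γ : Fin L → Bool) : ℝ :=
  (1 / (L : ℝ)) * ∑ ℓ : Fin L, spin (γ ℓ)

/-- Expectation of `f(g)` under the probability vector `x`. -/
noncomputable def expec {L : ℕ} (x : (Fin L → Bool) → ℝ) (f : (Fin L → Bool) → ℝ) : ℝ :=
  ∑ γ : Fin L → Bool, f γ * x γ

/-- The frequency of the `+1` allele at locus `ℓ`. -/
noncomputable def freq {L : ℕ} (x : (Fin L → Bool) → ℝ) (ℓ : Fin L) : ℝ :=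
  ∑ γ : Fin L → Bool, if γ ℓ = true then x γ else 0

/-- Full product-of-marginals (linkage equilibrium) projection `π(x)`. -/
noncomputable def piProj {L : ℕ} (x : (Fin L → Bool) → ℝ) : (Fin L → Bool) → ℝ :=
  fun γ => ∏ ℓ : Fin L, (∑ δ : Fin L → Bool, if δ ℓ = γ ℓ then x δ else 0)

/-- Marginal selection coefficient at `ℓ` for a log-fitness `W = U ∘ Z`:
`S^ℓ(x) = Cov_x(U(Z(g)), 1_{g^ℓ=+1})`. -/
noncomputable def selCoefU {L : ℕ} (U : ℝ → ℝ) (x : (Fin L → Bool) → ℝ) (ℓ : Fin L) : ℝ :=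
  expec x (fun γ => U (trait γ) * (if γ ℓ = true then 1 else 0))
    - expec x (fun γ => U (trait γ)) * expec x (fun γ => if γ ℓ = true then 1 else 0)

section Aux
variable {L : ℕ}

@[simp] lemma spin_true : spin true = 1 := rfl
@[simp] lemma spin_false : spin false = -1 := rfl

lemma expec_const_mul (x : (Fin L → Bool) → ℝ) (c : ℝ) (f : (Fin L → Bool) → ℝ) :
    expec x (fun γ => c * f γ) = c * expec x f := by
  simp [expec, Finset.mul_sum, mul_assoc]

lemma expec_sum {ι : Type*} (x : (Fin L → Bool) → ℝ) (s : Finset ι)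
    (f : ι → (Fin L → Bool) → ℝ) :
    expec x (fun γ => ∑ j ∈ s, f j γ) = ∑ j ∈ s, expec x (f j) := by
  unfold expec
  simp_rw [Finset.sum_mul]
  exact Finset.sum_comm

lemma marg_false (x : (Fin L → Bool) → ℝ) (hx1 : ∑ γ : Fin L → Bool, x γ = 1) (j : Fin L) :
    (∑ δ : Fin L → Bool, if δ j = false then x δ else 0) = 1 - freq x j := by
  have h : freq x j + ∑ δ : Fin L → Bool, (if δ j = false then x δ else 0) = 1 := by
    rw [freq, ← Finset.sum_add_distrib, ← hx1]
    refine Finset.sum_congr rfl fun δ _ => ?_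
    cases hδ : δ j <;> simp [hδ]
  linarith

lemma piProj_apply (x : (Fin L → Bool) → ℝ) (hx1 : ∑ γ : Fin L → Bool, x γ = 1)
    (γ : Fin L → Bool) :
    piProj x γ = ∏ j, (if γ j = true then freq x j else 1 - freq x j) := by
  unfold piProj
  refine Finset.prod_congr rfl fun j _ => ?_
  cases h : γ j
  · simp only [h, Bool.false_eq_true, if_false]
    exact marg_false x hx1 j
  · simp only [h]
    rfl

lemma expec_piProj_prod (x : (Fin L → Bool) → ℝ) (hx1 : ∑ γ : Fin L → Bool, x γ = 1)
    (g : Fin L → Bool → ℝ) :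
    expec (piProj x) (fun γ => ∏ j, g j (γ j))
      = ∏ j, (g j true * freq x j + g j false * (1 - freq x j)) := by
  unfold expec
  have h1 : ∀ γ : Fin L → Bool, (∏ j, g j (γ j)) * piProj x γ
      = ∏ j, (g j (γ j) * (if (γ j) = true then freq x j else 1 - freq x j)) := by
    intro γ
    rw [piProj_apply x hx1, Finset.prod_mul_distrib]
  simp_rw [h1]
  rw [← Fintype.prod_sum (fun j (b : Bool) => g j b * (if b = true then freq x j else 1 - freq x j))]
  refine Finset.prod_congr rfl fun j _ => ?_
  rw [Fintype.sum_bool]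
  simp

lemma expec_piProj_prodOn (x : (Fin L → Bool) → ℝ) (hx1 : ∑ γ : Fin L → Bool, x γ = 1)
    (S : Finset (Fin L)) (F : Fin L → Bool → ℝ) :
    expec (piProj x) (fun γ => ∏ j ∈ S, F j (γ j))
      = ∏ j ∈ S, (F j true * freq x j + F j false * (1 - freq x j)) := by
  have e1 : (fun γ : Fin L → Bool => ∏ j ∈ S, F j (γ j))
      = (fun γ => ∏ j, (if j ∈ S then F j (γ j) else 1)) := by
    funext γ
    rw [Fintype.prod_ite_mem]
  rw [e1, expec_piProj_prod x hx1 (fun j b => if j ∈ S then F j b else 1)]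
  rw [← Fintype.prod_ite_mem S (fun j => F j true * freq x j + F j false * (1 - freq x j))]
  refine Finset.prod_congr rfl fun j _ => ?_
  by_cases h : j ∈ S
  · simp [h]
  · simp [h]

end Aux

section Exp
variable {L : ℕ} (x : (Fin L → Bool) → ℝ) (hx1 : ∑ γ : Fin L → Bool, x γ = 1)

lemma expec_one (hx1 : ∑ γ : Fin L → Bool, x γ = 1) :
    expec (piProj x) (fun _ => (1:ℝ)) = 1 := by
  have h := expec_piProj_prodOn x hx1 ∅ (fun _ _ => (1:ℝ))
  simpa using h

lemma expec_ind (hx1 : ∑ γ : Fin L → Bool, x γ = 1) (ℓ : Fin L) :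
    expec (piProj x) (fun γ => if γ ℓ = true then (1:ℝ) else 0) = freq x ℓ := by
  have h := expec_piProj_prodOn x hx1 {ℓ} (fun _ b => if b = true then (1:ℝ) else 0)
  simpa using h

lemma expec_spin' (hx1 : ∑ γ : Fin L → Bool, x γ = 1) (k : Fin L) :
    expec (piProj x) (fun γ => spin (γ k)) = 2 * freq x k - 1 := by
  have h := expec_piProj_prodOn x hx1 {k} (fun _ b => spin b)
  simp only [Finset.prod_singleton, spin_true, spin_false, eq_self_iff_true, if_true, Bool.false_eq_true, if_false] at h
  rw [h]; ring

lemma expec_spin_ind (hx1 : ∑ γ : Fin L → Bool, x γ = 1) (k ℓ : Fin L) :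
    expec (piProj x) (fun γ => spin (γ k) * (if γ ℓ = true then (1:ℝ) else 0))
      = if k = ℓ then freq x ℓ else (2 * freq x k - 1) * freq x ℓ := by
  by_cases hkl : k = ℓ
  · subst hkl
    have h := expec_piProj_prodOn x hx1 {k}
      (fun _ b => spin b * (if b = true then (1:ℝ) else 0))
    simp only [Finset.prod_singleton, spin_true, spin_false, eq_self_iff_true, if_true, Bool.false_eq_true, if_false] at h
    rw [if_pos rfl, h]; simp
  · have h := expec_piProj_prodOn x hx1 {k, ℓ}
      (fun j b => if j = k then spin b else (if b = true then (1:ℝ) else 0))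
    simp only [Finset.prod_pair hkl, if_pos rfl, if_neg (Ne.symm hkl),
      spin_true, spin_false, eq_self_iff_true, if_true, Bool.false_eq_true, if_false] at h
    rw [if_neg hkl, h]; ring

lemma expec_spin_spin (hx1 : ∑ γ : Fin L → Bool, x γ = 1) (j k : Fin L) :
    expec (piProj x) (fun γ => spin (γ j) * spin (γ k))
      = if j = k then 1 else (2 * freq x j - 1) * (2 * freq x k - 1) := by
  by_cases hjk : j = k
  · subst hjk
    have h := expec_piProj_prodOn x hx1 {j} (fun _ b => spin b * spin b)
    simp only [Finset.prod_singleton, spin_true, spin_false, eq_self_iff_true, if_true, Bool.false_eq_true, if_false] at h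
    rw [if_pos rfl, h]; ring
  · have h := expec_piProj_prodOn x hx1 {j, k} (fun _ b => spin b)
    simp only [Finset.prod_pair hjk, spin_true, spin_false, eq_self_iff_true, if_true, Bool.false_eq_true, if_false] at h
    rw [if_neg hjk, h]; ring

lemma expec_spin_spin_ind (hx1 : ∑ γ : Fin L → Bool, x γ = 1) (j k ℓ : Fin L) :
    expec (piProj x) (fun γ => spin (γ j) * spin (γ k) * (if γ ℓ = true then (1:ℝ) else 0))
      = if j = k then freq x ℓ
        else if j = ℓ then freq x ℓ * (2 * freq x k - 1)
        else if k = ℓ then (2 * freq x j - 1) * freq x ℓ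
        else (2 * freq x j - 1) * (2 * freq x k - 1) * freq x ℓ := by
  by_cases hjk : j = k
  · subst hjk
    rw [if_pos rfl]
    by_cases hjl : j = ℓ
    · subst hjl
      have h := expec_piProj_prodOn x hx1 {j}
        (fun _ b => spin b * spin b * (if b = true then (1:ℝ) else 0))
      simp only [Finset.prod_singleton, spin_true, spin_false, eq_self_iff_true, if_true, Bool.false_eq_true, if_false] at h
      rw [h]; ring
    · have h := expec_piProj_prodOn x hx1 {j, ℓ}
        (fun i b => if i = j then spin b * spin b else (if b = true then (1:ℝ) else 0))
      simp only [Finset.prod_pair hjl, if_pos rfl, if_neg (Ne.symm hjl),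
        spin_true, spin_false, eq_self_iff_true, if_true, Bool.false_eq_true, if_false] at h
      rw [h]; ring
  · rw [if_neg hjk]
    by_cases hjl : j = ℓ
    · subst hjl
      rw [if_pos rfl]
      have h := expec_piProj_prodOn x hx1 {j, k}
        (fun i b => if i = j then spin b * (if b = true then (1:ℝ) else 0) else spin b)
      simp only [Finset.prod_pair hjk, if_pos rfl, if_neg (Ne.symm hjk),
        spin_true, spin_false, eq_self_iff_true, if_true, Bool.false_eq_true, if_false] at h
      have e : (fun γ : Fin L → Bool =>
            spin (γ j) * (if γ j = true then (1:ℝ) else 0) * spin (γ k))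
          = (fun γ : Fin L → Bool =>
            spin (γ j) * spin (γ k) * (if γ j = true then (1:ℝ) else 0)) := by
        funext γ; ring
      rw [e] at h
      rw [h]; ring
    · rw [if_neg hjl]
      by_cases hkl : k = ℓ
      · subst hkl
        rw [if_pos rfl]
        have h := expec_piProj_prodOn x hx1 {j, k}
          (fun i b => if i = j then spin b else spin b * (if b = true then (1:ℝ) else 0))
        simp only [Finset.prod_pair hjk, if_pos rfl, if_neg (Ne.symm hjk),
          spin_true, spin_false, eq_self_iff_true, if_true, Bool.false_eq_true, if_false] at h
        have e : (fun γ : Fin L → Bool =>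
              spin (γ j) * (spin (γ k) * (if γ k = true then (1:ℝ) else 0)))
            = (fun γ : Fin L → Bool =>
              spin (γ j) * spin (γ k) * (if γ k = true then (1:ℝ) else 0)) := by
          funext γ; ring
        rw [e] at h
        rw [h]; ring
      · rw [if_neg hkl]
        have hjS : j ∉ ({k, ℓ} : Finset (Fin L)) := by simp [hjk, hjl]
        have hkS : k ∉ ({ℓ} : Finset (Fin L)) := by simp [hkl]
        have h := expec_piProj_prodOn x hx1 {j, k, ℓ}
          (fun i b => if i = ℓ then (if b = true then (1:ℝ) else 0) else spin b)
        simp only [show ({j, k, ℓ} : Finset (Fin L)) = insert j (insert k {ℓ}) from rfl,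
          Finset.prod_insert hjS, Finset.prod_insert hkS, Finset.prod_singleton,
          if_pos rfl, if_neg hjl, if_neg hkl, spin_true, spin_false, eq_self_iff_true, if_true, Bool.false_eq_true, if_false] at h
        have e : (fun γ : Fin L → Bool =>
              spin (γ j) * (spin (γ k) * (if γ ℓ = true then (1:ℝ) else 0)))
            = (fun γ : Fin L → Bool =>
              spin (γ j) * spin (γ k) * (if γ ℓ = true then (1:ℝ) else 0)) := by
          funext γ; ring
        rw [e] at h
        rw [h]; ring

end Exp

section Decomp
variable {L : ℕ} (a b c : ℝ)

lemma expec_decomp (x f : (Fin L → Bool) → ℝ) :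
    expec x (fun γ => (a * trait γ ^ 2 + b * trait γ + c) * f γ)
      = a * expec x (fun γ => trait γ ^ 2 * f γ) + b * expec x (fun γ => trait γ * f γ)
        + c * expec x f := by
  simp only [expec, Finset.mul_sum, ← Finset.sum_add_distrib]
  exact Finset.sum_congr rfl fun γ _ => by ring

lemma expec_decomp0 (x : (Fin L → Bool) → ℝ) :
    expec x (fun γ => a * trait γ ^ 2 + b * trait γ + c)
      = a * expec x (fun γ => trait γ ^ 2) + b * expec x (fun γ => trait γ)
        + c * expec x (fun _ => 1) := by
  simp only [expec, Finset.mul_sum, ← Finset.sum_add_distrib]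
  exact Finset.sum_congr rfl fun γ _ => by ring

end Decomp

section TraitExp
variable {L : ℕ} (x : (Fin L → Bool) → ℝ)

lemma expec_trait (hx1 : ∑ γ : Fin L → Bool, x γ = 1) :
    expec (piProj x) (fun γ => trait γ) = (1 / (L:ℝ)) * ∑ j, (2 * freq x j - 1) := by
  have e : (fun γ : Fin L → Bool => trait γ)
      = fun γ => (1 / (L:ℝ)) * ∑ j, spin (γ j) := rfl
  rw [e, expec_const_mul, expec_sum]
  congr 1
  exact Finset.sum_congr rfl fun j _ => expec_spin' x hx1 j

lemma expec_trait_ind (hx1 : ∑ γ : Fin L → Bool, x γ = 1) (ℓ : Fin L) :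
    expec (piProj x) (fun γ => trait γ * (if γ ℓ = true then (1:ℝ) else 0))
      = (1 / (L:ℝ)) * ((∑ j, (2 * freq x j - 1)) * freq x ℓ
          + (freq x ℓ - (2 * freq x ℓ - 1) * freq x ℓ)) := by
  have e : (fun γ : Fin L → Bool => trait γ * (if γ ℓ = true then (1:ℝ) else 0))
      = fun γ => (1 / (L:ℝ)) * ∑ j, (spin (γ j) * (if γ ℓ = true then (1:ℝ) else 0)) := by
    funext γ
    simp only [trait]
    rw [mul_assoc, Finset.sum_mul]
  rw [e, expec_const_mul, expec_sum]
  congr 1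
  rw [Finset.sum_congr rfl (fun j _ => expec_spin_ind x hx1 j ℓ)]
  have step : ∀ j : Fin L, (if j = ℓ then freq x ℓ else (2 * freq x j - 1) * freq x ℓ)
      = (2 * freq x j - 1) * freq x ℓ
        + (if j = ℓ then freq x ℓ - (2 * freq x ℓ - 1) * freq x ℓ else 0) := by
    intro j
    by_cases h : j = ℓ
    · subst h; simp only [eq_self_iff_true, if_true]; ring
    · simp only [if_neg h]; ring
  rw [Finset.sum_congr rfl (fun j _ => step j), Finset.sum_add_distrib,
    Finset.sum_ite_eq' Finset.univ ℓ, ← Finset.sum_mul]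
  simp

lemma expec_trait_sq (hx1 : ∑ γ : Fin L → Bool, x γ = 1) :
    expec (piProj x) (fun γ => trait γ ^ 2)
      = (1 / (L:ℝ))^2 * ∑ j, ∑ k,
          (if j = k then (1:ℝ) else (2 * freq x j - 1) * (2 * freq x k - 1)) := by
  have e : (fun γ : Fin L → Bool => trait γ ^ 2)
      = fun γ => (1 / (L:ℝ))^2 * ∑ j, ∑ k, (spin (γ j) * spin (γ k)) := by
    funext γ
    simp only [trait]
    rw [mul_pow, pow_two (∑ i : Fin L, spin (γ i)), Finset.sum_mul_sum]
  rw [e, expec_const_mul, expec_sum]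
  congr 1
  refine Finset.sum_congr rfl fun j _ => ?_
  rw [expec_sum]
  exact Finset.sum_congr rfl fun k _ => expec_spin_spin x hx1 j k

lemma expec_trait_sq_ind (hx1 : ∑ γ : Fin L → Bool, x γ = 1) (ℓ : Fin L) :
    expec (piProj x) (fun γ => trait γ ^ 2 * (if γ ℓ = true then (1:ℝ) else 0))
      = (1 / (L:ℝ))^2 * ∑ j, ∑ k,
          (if j = k then freq x ℓ
           else if j = ℓ then freq x ℓ * (2 * freq x k - 1)
           else if k = ℓ then (2 * freq x j - 1) * freq x ℓ
           else (2 * freq x j - 1) * (2 * freq x k - 1) * freq x ℓ) := by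
  have e : (fun γ : Fin L → Bool => trait γ ^ 2 * (if γ ℓ = true then (1:ℝ) else 0))
      = fun γ => (1 / (L:ℝ))^2 * ∑ j, ∑ k,
          (spin (γ j) * spin (γ k) * (if γ ℓ = true then (1:ℝ) else 0)) := by
    funext γ
    simp only [trait]
    rw [mul_pow, pow_two (∑ i : Fin L, spin (γ i)), Finset.sum_mul_sum, mul_assoc, Finset.sum_mul]
    simp only [Finset.sum_mul]
  rw [e, expec_const_mul, expec_sum]
  congr 1
  refine Finset.sum_congr rfl fun j _ => ?_
  rw [expec_sum]
  exact Finset.sum_congr rfl fun k _ => expec_spin_spin_ind x hx1 j k ℓ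

end TraitExp

lemma double_sum_key {L : ℕ} (x : (Fin L → Bool) → ℝ) (ℓ : Fin L) :
    (∑ j, ∑ k, (if j = k then freq x ℓ
        else if j = ℓ then freq x ℓ * (2 * freq x k - 1)
        else if k = ℓ then (2 * freq x j - 1) * freq x ℓ
        else (2 * freq x j - 1) * (2 * freq x k - 1) * freq x ℓ))
      - (∑ j, ∑ k, (if j = k then (1:ℝ) else (2 * freq x j - 1) * (2 * freq x k - 1)))
          * freq x ℓ
    = (freq x ℓ * (1 - (2 * freq x ℓ - 1)))
        * (2 * (∑ j, (2 * freq x j - 1)) - 2 * (2 * freq x ℓ - 1)) := by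
  have hB : ∀ j : Fin L, (∑ k, (if j = k then (1:ℝ) else (2 * freq x j - 1) * (2 * freq x k - 1)))
      = (2 * freq x j - 1) * (∑ k, (2 * freq x k - 1))
        + (1 - (2 * freq x j - 1) * (2 * freq x j - 1)) := by
    intro j
    have step : ∀ k : Fin L, (if j = k then (1:ℝ) else (2 * freq x j - 1) * (2 * freq x k - 1))
        = (2 * freq x j - 1) * (2 * freq x k - 1)
          + (if j = k then 1 - (2 * freq x j - 1) * (2 * freq x j - 1) else 0) := by
      intro k
      by_cases h : j = k
      · subst h; simp only [eq_self_iff_true, if_true]; ring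
      · simp only [if_neg h]; ring
    rw [Finset.sum_congr rfl fun k _ => step k, Finset.sum_add_distrib, ← Finset.mul_sum,
      Finset.sum_ite_eq Finset.univ j]
    simp
  have hD : ∀ j : Fin L,
      (∑ k, (if j = k then freq x ℓ
        else if j = ℓ then freq x ℓ * (2 * freq x k - 1)
        else if k = ℓ then (2 * freq x j - 1) * freq x ℓ
        else (2 * freq x j - 1) * (2 * freq x k - 1) * freq x ℓ))
      - (∑ k, (if j = k then (1:ℝ) else (2 * freq x j - 1) * (2 * freq x k - 1))) * freq x ℓ
      = if j = ℓ then (freq x ℓ * (1 - (2 * freq x ℓ - 1)))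
            * ((∑ k, (2 * freq x k - 1)) - (2 * freq x ℓ - 1))
        else (freq x ℓ * (1 - (2 * freq x ℓ - 1))) * (2 * freq x j - 1) := by
    intro j
    rw [hB j]
    by_cases hj : j = ℓ
    · subst hj
      have stepT : ∀ k : Fin L, (if j = k then freq x j
          else if j = j then freq x j * (2 * freq x k - 1)
          else if k = j then (2 * freq x j - 1) * freq x j
          else (2 * freq x j - 1) * (2 * freq x k - 1) * freq x j)
          = freq x j * (2 * freq x k - 1)
            + (if j = k then freq x j - freq x j * (2 * freq x j - 1) else 0) := by
        intro k
        by_cases h : j = k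
        · subst h; simp only [eq_self_iff_true, if_true]; ring
        · simp only [if_neg h, eq_self_iff_true, if_true]; ring
      rw [Finset.sum_congr rfl fun k _ => stepT k, Finset.sum_add_distrib, ← Finset.mul_sum,
        Finset.sum_ite_eq Finset.univ j]
      simp only [Finset.mem_univ, if_true, eq_self_iff_true]
      ring
    · have stepT : ∀ k : Fin L, (if j = k then freq x ℓ
          else if j = ℓ then freq x ℓ * (2 * freq x k - 1)
          else if k = ℓ then (2 * freq x j - 1) * freq x ℓ
          else (2 * freq x j - 1) * (2 * freq x k - 1) * freq x ℓ)
          = ((2 * freq x j - 1) * freq x ℓ) * (2 * freq x k - 1)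
            + ((if j = k then freq x ℓ - (2 * freq x j - 1) * (2 * freq x j - 1) * freq x ℓ
                  else 0)
              + (if k = ℓ then (2 * freq x j - 1) * freq x ℓ
                    - (2 * freq x j - 1) * (2 * freq x ℓ - 1) * freq x ℓ else 0)) := by
        intro k
        by_cases h1 : j = k
        · subst h1
          simp only [eq_self_iff_true, if_true, if_neg hj]; ring
        · by_cases h2 : k = ℓ
          · simp only [if_neg h1, if_neg hj, h2, eq_self_iff_true, if_true]; ring
          · simp only [if_neg h1, if_neg hj, if_neg h2]; ring
      rw [Finset.sum_congr rfl fun k _ => stepT k, Finset.sum_add_distrib,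
        Finset.sum_add_distrib, ← Finset.mul_sum, Finset.sum_ite_eq Finset.univ j,
        Finset.sum_ite_eq' Finset.univ ℓ]
      simp only [Finset.mem_univ, if_true, if_neg hj]
      ring
  rw [Finset.sum_mul, ← Finset.sum_sub_distrib, Finset.sum_congr rfl fun j _ => hD j]
  have stepO : ∀ j : Fin L, (if j = ℓ then (freq x ℓ * (1 - (2 * freq x ℓ - 1)))
            * ((∑ k, (2 * freq x k - 1)) - (2 * freq x ℓ - 1))
        else (freq x ℓ * (1 - (2 * freq x ℓ - 1))) * (2 * freq x j - 1))
      = (freq x ℓ * (1 - (2 * freq x ℓ - 1))) * (2 * freq x j - 1)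
        + (if j = ℓ then (freq x ℓ * (1 - (2 * freq x ℓ - 1)))
              * ((∑ k, (2 * freq x k - 1)) - (2 * freq x ℓ - 1))
            - (freq x ℓ * (1 - (2 * freq x ℓ - 1))) * (2 * freq x ℓ - 1) else 0) := by
    intro j
    by_cases h : j = ℓ
    · subst h; simp only [eq_self_iff_true, if_true]; ring
    · simp only [if_neg h]; ring
  rw [Finset.sum_congr rfl fun j _ => stepO j, Finset.sum_add_distrib, ← Finset.mul_sum,
    Finset.sum_ite_eq' Finset.univ ℓ]
  simp only [Finset.mem_univ, if_true]
  ring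

lemma final_bound (a b c : ℝ) {Lr P M S2 : ℝ} (hL : 1 ≤ Lr) (hp0 : 0 ≤ P) (hp1 : P ≤ 1) :
    |Lr * ((a * ((1/Lr)^2 * (S2 * P + P * (1 - (2*P-1)) * (2*M - 2*(2*P-1))))
          + b * ((1/Lr) * (M * P + (P - (2*P-1)*P))) + c * P)
        - (a * ((1/Lr)^2 * S2) + b * ((1/Lr) * M) + c * 1) * P)
      - P * (1-P) * (2 * (2*a*((1/Lr)*M) + b))|
    ≤ (|a|+1)/Lr := by
  have hLpos : (0:ℝ) < Lr := lt_of_lt_of_le zero_lt_one hL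
  have h0 : Lr ≠ 0 := ne_of_gt hLpos
  have heq : Lr * ((a * ((1/Lr)^2 * (S2 * P + P * (1 - (2*P-1)) * (2*M - 2*(2*P-1))))
          + b * ((1/Lr) * (M * P + (P - (2*P-1)*P))) + c * P)
        - (a * ((1/Lr)^2 * S2) + b * ((1/Lr) * M) + c * 1) * P)
      - P * (1-P) * (2 * (2*a*((1/Lr)*M) + b))
      = (-(2 * a * (P * (1 - (2*P-1))) * (2*P-1))) / Lr := by
    field_simp
    ring
  rw [heq, abs_div, abs_of_pos hLpos]
  gcongr
  have h1 : |(2*P-1)| ≤ 1 := abs_le.2 ⟨by linarith, by linarith⟩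
  have hc0' : 0 ≤ P * (1 - (2*P-1)) := by nlinarith
  have hc0 : P * (1 - (2*P-1)) ≤ 1/2 := by nlinarith [sq_nonneg (2*P-1)]
  rw [abs_neg, abs_mul, abs_mul, abs_mul, abs_two, abs_of_nonneg hc0']
  nlinarith [mul_nonneg (mul_nonneg (abs_nonneg a) hc0') (sub_nonneg.2 h1),
    mul_nonneg (abs_nonneg a) (sub_nonneg.2 hc0)]


/-- For a quadratic `U(z) = a z² + b z + c` (so `U'(z) = 2az + b`): uniformly in the
probability vector `x`, `L·S^ℓ(π(x)) = p^ℓ(x)(1-p^ℓ(x))·2U'(⟨μ_x, 2Id-1⟩) + O(1/L)`,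
where `⟨μ_x, 2Id-1⟩ = (1/L)∑_ℓ (2p^ℓ(x)-1)`. -/
theorem selCoef_piProj_expansion (a b c : ℝ) :
    ∃ C : ℝ, 0 < C ∧ ∀ (L : ℕ), 1 ≤ L →
      ∀ x : (Fin L → Bool) → ℝ, (∀ γ, 0 ≤ x γ) → (∑ γ : Fin L → Bool, x γ = 1) →
      ∀ ℓ : Fin L,
        |(L : ℝ) * selCoefU (fun z => a * z ^ 2 + b * z + c) (piProj x) ℓ
          - freq x ℓ * (1 - freq x ℓ) *
              (2 * (2 * a * ((1 / (L : ℝ)) * ∑ ℓ' : Fin L, (2 * freq x ℓ' - 1)) + b))|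
        ≤ C / (L : ℝ) := by
  refine ⟨|a| + 1, by positivity, ?_⟩
  intro L hL x hx0 hx1 ℓ
  have hLr : (1:ℝ) ≤ (L:ℝ) := by exact_mod_cast hL
  have hp0 : 0 ≤ freq x ℓ := Finset.sum_nonneg fun γ _ => by
    by_cases h : γ ℓ = true <;> simp [h, hx0 γ]
  have hp1 : freq x ℓ ≤ 1 := by
    rw [← hx1]
    exact Finset.sum_le_sum fun γ _ => by by_cases h : γ ℓ = true <;> simp [h, hx0 γ]
  have e1 : selCoefU (fun z => a * z ^ 2 + b * z + c) (piProj x) ℓ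
      = (a * expec (piProj x) (fun γ => trait γ ^ 2 * (if γ ℓ = true then (1:ℝ) else 0))
         + b * expec (piProj x) (fun γ => trait γ * (if γ ℓ = true then (1:ℝ) else 0))
         + c * expec (piProj x) (fun γ => if γ ℓ = true then (1:ℝ) else 0))
        - (a * expec (piProj x) (fun γ => trait γ ^ 2) + b * expec (piProj x) (fun γ => trait γ)
           + c * expec (piProj x) (fun _ => (1:ℝ)))
          * expec (piProj x) (fun γ => if γ ℓ = true then (1:ℝ) else 0) := by
    simp only [selCoefU]
    rw [expec_decomp, expec_decomp0]
  have hT : (∑ j, ∑ k, (if j = k then freq x ℓ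
        else if j = ℓ then freq x ℓ * (2 * freq x k - 1)
        else if k = ℓ then (2 * freq x j - 1) * freq x ℓ
        else (2 * freq x j - 1) * (2 * freq x k - 1) * freq x ℓ))
      = (∑ j, ∑ k, (if j = k then (1:ℝ) else (2 * freq x j - 1) * (2 * freq x k - 1)))
          * freq x ℓ
        + freq x ℓ * (1 - (2 * freq x ℓ - 1))
            * (2 * (∑ j, (2 * freq x j - 1)) - 2 * (2 * freq x ℓ - 1)) := by
    have := double_sum_key x ℓ
    linarith
  rw [e1, expec_ind x hx1 ℓ, expec_one x hx1, expec_trait x hx1, expec_trait_ind x hx1 ℓ,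
    expec_trait_sq x hx1, expec_trait_sq_ind x hx1 ℓ, hT]
  exact final_bound a b c hLr hp0 hp1
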